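/- The expected SAA optimal value is monotone nondecreasing in the sample size: with z*_n = min_{x ∈ X} (1/n) Σ_{j=1}^n F(x, ξ_j) for i.i.d. samples, E[z*_{n+1}] ≥ E[z*_n]. -/

import Mathlib

/-!
Split the `n + 1` samples into the `n + 1` leave-one-out subsamples of size `n`. Averaging the
leave-one-out empirical objectives gives back the full empirical objective, and the minimum of an
average dominates the average of the minima. Since the samples are i.i.d., every leave-one-out
optimal value has the same law as `z*_n`, hence the same expectation.
-/

open MeasureTheory ProbabilityTheory Finset

theorem Finset.sum_sum_erase {ι M : Type*} [AddCommGroup M] [DecidableEq ι] (s : Finset ι)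
    (f : ι → M) : ∑ k ∈ s, ∑ j ∈ s.erase k, f j = (#s - 1) • ∑ j ∈ s, f j := by
  rcases s.eq_empty_or_nonempty with rfl | hs
  · simp
  obtain ⟨m, hm⟩ := Nat.exists_eq_add_one.mpr hs.card_pos
  rw [sum_congr rfl fun k hk => sum_erase_eq_sub hk, sum_sub_distrib, sum_const, hm, succ_nsmul,
    add_sub_cancel_right, Nat.add_sub_cancel]

theorem MeasureTheory.Integrable.iInf {α ι : Type*} [MeasurableSpace α] {μ : Measure α}
    [Fintype ι] [Nonempty ι] {f : ι → α → ℝ} (hf : ∀ i, Integrable (f i) μ) :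
    Integrable (fun a => ⨅ i, f i a) μ := by
  refine (integrable_finsetSum univ fun i _ => (hf i).abs).mono' ?_ (.of_forall fun a => ?_)
  · exact (AEMeasurable.iInf fun i => (hf i).aemeasurable).aestronglyMeasurable
  · obtain ⟨i, hi⟩ := exists_eq_ciInf_of_finite (f := fun i => f i a)
    rw [Real.norm_eq_abs, ← hi]
    exact single_le_sum (f := fun i => |f i a|) (fun i _ => abs_nonneg _) (mem_univ i)

theorem ProbabilityTheory.iIndepFun.map_precomp_eq_pi {Ω Ω' ι κ : Type*} [MeasurableSpace Ω]
    [MeasurableSpace Ω'] [Fintype κ] {P : Measure Ω} {μ : Measure Ω'} [IsProbabilityMeasure μ]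
    {ξ : ι → Ω → Ω'} (hindep : iIndepFun ξ P) (hmeas : ∀ j, AEMeasurable (ξ j) P)
    (hdist : ∀ j, P.map (ξ j) = μ) {g : κ → ι} (hg : g.Injective) :
    P.map (fun ω i => ξ (g i) ω) = Measure.pi fun _ => μ := by
  simpa only [hdist] using (hindep.precomp hg).map_fun_eq_pi_map fun i => hmeas (g i)

/-- `saaValue F (range n) (ξ · ω)` is the SAA optimal value `z*_n`. -/
noncomputable def saaValue {X ι Ω' : Type*} (F : X → Ω' → ℝ) (s : Finset ι) (y : ι → Ω') : ℝ :=
  ⨅ x, (#s : ℝ)⁻¹ * ∑ j ∈ s, F x (y j)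

section saaValue

variable {X ι Ω' : Type*} (F : X → Ω' → ℝ)

theorem saaValue_map {κ : Type*} (s : Finset κ) (e : κ ↪ ι) (y : ι → Ω') :
    saaValue F (s.map e) y = saaValue F s (y ∘ e) := by
  simp [saaValue, sum_map]

theorem mean_saaValue_erase_le [Finite X] [Nonempty X] [DecidableEq ι] {s : Finset ι}
    (hs : 1 < #s) (y : ι → Ω') :
    (#s : ℝ)⁻¹ * ∑ k ∈ s, saaValue F (s.erase k) y ≤ saaValue F s y := by
  have hm : ((#s - 1 : ℕ) : ℝ) ≠ 0 := Nat.cast_ne_zero.mpr (by omega)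
  refine le_ciInf fun x => ?_
  calc (#s : ℝ)⁻¹ * ∑ k ∈ s, saaValue F (s.erase k) y
      ≤ (#s : ℝ)⁻¹ * ∑ k ∈ s, ((#s - 1 : ℕ) : ℝ)⁻¹ * ∑ j ∈ s.erase k, F x (y j) := by
        gcongr with k hk
        rw [← card_erase_of_mem hk]
        exact ciInf_le (Set.finite_range _).bddBelow x
    _ = (#s : ℝ)⁻¹ * ∑ j ∈ s, F x (y j) := by
        rw [← mul_sum, sum_sum_erase, nsmul_eq_mul, inv_mul_cancel_left₀ hm]

end saaValue

section iid

variable {Ω Ω' ι X : Type*} [MeasurableSpace Ω] [MeasurableSpace Ω'] {P : Measure Ω}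
  {μ : Measure Ω'} {ξ : ι → Ω → Ω'} {F : X → Ω' → ℝ}

theorem aemeasurable_saaValue [IsProbabilityMeasure μ] [Countable X]
    (hF : ∀ x, AEMeasurable (F x) μ) {κ : Type*} [Fintype κ] (s : Finset κ) :
    AEMeasurable (saaValue F s) (Measure.pi fun _ : κ => μ) :=
  AEMeasurable.iInf fun x => (Finset.aemeasurable_fun_sum s fun j _ =>
    (hF x).comp_quasiMeasurePreserving
      (measurePreserving_eval _ j).quasiMeasurePreserving).const_mul _

theorem integrable_saaValue [Fintype X] [Nonempty X] (hF : ∀ x, Integrable (F x) μ)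
    (hmeas : ∀ j, AEMeasurable (ξ j) P) (hdist : ∀ j, P.map (ξ j) = μ) (s : Finset ι) :
    Integrable (fun ω => saaValue F s (ξ · ω)) P :=
  Integrable.iInf fun x => (integrable_finsetSum s fun j _ =>
    ((hdist j ▸ hF x).comp_aemeasurable (hmeas j))).const_mul _

theorem integral_saaValue_eq_integral_pi [IsProbabilityMeasure μ] [Countable X] [LinearOrder ι]
    (hF : ∀ x, AEMeasurable (F x) μ) (hindep : iIndepFun ξ P) (hmeas : ∀ j, AEMeasurable (ξ j) P)
    (hdist : ∀ j, P.map (ξ j) = μ) (s : Finset ι) {k : ℕ} (hs : #s = k) :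
    ∫ ω, saaValue F s (ξ · ω) ∂P
      = ∫ y, saaValue F (univ : Finset (Fin k)) y ∂(Measure.pi fun _ => μ) := by
  set e := s.orderEmbOfFin hs
  have hlaw := hindep.map_precomp_eq_pi hmeas hdist e.injective
  rw [← hlaw, integral_map (aemeasurable_pi_lambda _ fun i => hmeas (e i))
    (hlaw ▸ (aemeasurable_saaValue hF _).aestronglyMeasurable)]
  conv_lhs => rw [← s.map_orderEmbOfFin_univ hs]
  simp_rw [saaValue_map]
  rfl

theorem integral_saaValue_eq_of_card_eq [IsProbabilityMeasure μ] [Countable X] [LinearOrder ι]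
    (hF : ∀ x, AEMeasurable (F x) μ) (hindep : iIndepFun ξ P) (hmeas : ∀ j, AEMeasurable (ξ j) P)
    (hdist : ∀ j, P.map (ξ j) = μ) {s t : Finset ι} (hst : #s = #t) :
    ∫ ω, saaValue F s (ξ · ω) ∂P = ∫ ω, saaValue F t (ξ · ω) ∂P := by
  rw [integral_saaValue_eq_integral_pi hF hindep hmeas hdist s hst,
    integral_saaValue_eq_integral_pi hF hindep hmeas hdist t rfl]

end iid

/-- Monotonicity of the expected SAA optimal value in the sample size:
`E[z*_{n+1}] ≥ E[z*_n]`. -/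
theorem saa_expected_value_monotone
    {Ω : Type*} [MeasureSpace Ω] (P : Measure Ω) [IsProbabilityMeasure P]
    {Ω' : Type*} [MeasurableSpace Ω'] (μ : Measure Ω') [IsProbabilityMeasure μ]
    {X : Type*} [Fintype X] [Nonempty X]
    (F : X → Ω' → ℝ)
    (hF : ∀ x, Integrable (F x) μ)
    (ξ : ℕ → Ω → Ω')
    (hmeas : ∀ j, Measurable (ξ j))
    (hdist : ∀ j, Measure.map (ξ j) P = μ)
    (hindep : iIndepFun ξ P)
    (n : ℕ) (hn : 0 < n) :
    (∫ ω, (⨅ x : X, (1 / (n : ℝ)) * ∑ j ∈ Finset.range n, F x (ξ j ω)) ∂P)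
      ≤ ∫ ω, (⨅ x : X, (1 / ((n : ℝ) + 1)) * ∑ j ∈ Finset.range (n + 1), F x (ξ j ω)) ∂P := by
  have hz (m : ℕ) : (fun ω => ⨅ x : X, (1 / (m : ℝ)) * ∑ j ∈ range m, F x (ξ j ω))
      = fun ω => saaValue F (range m) (ξ · ω) := by
    simp [saaValue, one_div]
  rw [hz n, ← Nat.cast_add_one, hz (n + 1)]
  have hξ (j : ℕ) : AEMeasurable (ξ j) P := (hmeas j).aemeasurable
  set S := range (n + 1)
  have hS : 1 < #S := by simpa [S] using hn
  have hint := integrable_saaValue hF hξ hdist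
  have hloo (k : ℕ) (hk : k ∈ S) :
      ∫ ω, saaValue F (S.erase k) (ξ · ω) ∂P = ∫ ω, saaValue F (range n) (ξ · ω) ∂P :=
    integral_saaValue_eq_of_card_eq (fun x => (hF x).aemeasurable) hindep hξ hdist
      (by simp [S, card_erase_of_mem hk])
  calc ∫ ω, saaValue F (range n) (ξ · ω) ∂P
      = (#S : ℝ)⁻¹ * ∑ k ∈ S, ∫ ω, saaValue F (S.erase k) (ξ · ω) ∂P := by
        rw [sum_congr rfl hloo, sum_const, nsmul_eq_mul, inv_mul_cancel_left₀ (by positivity)]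
    _ = ∫ ω, (#S : ℝ)⁻¹ * ∑ k ∈ S, saaValue F (S.erase k) (ξ · ω) ∂P := by
        rw [integral_const_mul, integral_finsetSum _ fun k _ => hint _]
    _ ≤ ∫ ω, saaValue F S (ξ · ω) ∂P :=
        integral_mono ((integrable_finsetSum _ fun k _ => hint _).const_mul _) (hint S)
          fun ω => mean_saaValue_erase_le F hS _
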